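/- Fix t > 0 and define for n ≥ 1 the function φ_{n,t} ∈ L²(ℝ) by φ_{n,t}(s) = e^{−(t/2+s)} Σ_{k=1}^n (χ_{[−tk/(2n), −tk/(2n)+t/(4n)]}(s) − χ_{[−tk/(2n)+t/(4n), −t(k−1)/(2n)]}(s)). Then: (i) ‖φ_{n,t}‖² = (1 − e^{−t})/2 for every n ≥ 1 (in particular the norm is strictly positive and independent of n); (ii) φ_{n,t} converges weakly to 0 in L²(ℝ) as n → ∞, i.e. ⟨f, φ_{n,t}⟩ → 0 for every f ∈ L²(ℝ); hence (iii) the sequence (φ_{n,t})_n does not converge in the norm of L²(ℝ). -/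

import Mathlib

noncomputable section

open MeasureTheory Filter Finset

/-- The one-photon wave function `φ_{n,t}` produced after `n` Pauli decoupling cycles of total
duration `t` in the qubit coupled to the singular Friedrichs–Lee model. -/
def phiFL (t : ℝ) (n : ℕ) (s : ℝ) : ℂ :=
  ((Real.exp (-(t / 2 + s)) *
      ∑ k ∈ Finset.Icc 1 n,
        ((Set.Icc (-(t * k) / (2 * n)) (-(t * k) / (2 * n) + t / (4 * n))).indicator
            (1 : ℝ → ℝ) s -
          (Set.Icc (-(t * k) / (2 * n) + t / (4 * n)) (-(t * ((k : ℝ) - 1)) / (2 * n))).indicator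
            (1 : ℝ → ℝ) s) : ℝ) : ℂ)

/-!
Put `δ = t / (4n)`. Then `φ_{n,t}(s) = e^{-(t/2+s)} w(s)`, where the square wave `w` is `+1` on the
cells `[-(2k+2)δ, -(2k+1)δ]` and `-1` on `[-(2k+1)δ, -2kδ]`, `k < n`. Off the null grid `-ℕδ`
exactly one cell contains `s`, so `w² = χ_{(-t/2, 0)}` a.e., which gives (i).

Against a uniformly continuous `ψ`, shifting each `-1` cell by `δ` onto its `+1` neighbour gives
`∫ w ψ = ∑_k ∫_{cell} (ψ(x) - ψ(x + δ)) dx`, of size at most `nδ · ω_ψ(δ) = (t/4) ω_ψ(δ) → 0`.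
As the `φ_{n,t}` are bounded in `L²` and compactly supported continuous functions are dense,
this gives (ii). A norm limit `g` would then satisfy `⟪g, g⟫ = lim ⟪g, φ_{n,t}⟫ = 0`, forcing
`‖φ_{n,t}‖ → 0` against (i).
-/

open scoped ENNReal Topology

section L2

variable {α 𝕜 : Type*} [MeasurableSpace α] {μ : Measure α} [RCLike 𝕜]

lemma MeasureTheory.L2.inner_toLp_eq_integral {f : Lp 𝕜 2 μ} {g φ : α → 𝕜} (hfg : f =ᵐ[μ] g)
    (hφ : MemLp φ 2 μ) :
    inner 𝕜 f (hφ.toLp φ) = ∫ a, starRingEnd 𝕜 (g a) * φ a ∂μ := by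
  rw [L2.inner_def]
  refine integral_congr_ae ?_
  filter_upwards [hfg, hφ.coeFn_toLp] with a hf hφa
  rw [hf, hφa, RCLike.inner_apply']

lemma MeasureTheory.L2.norm_toLp_sq {φ : α → 𝕜} (hφ : MemLp φ 2 μ) :
    ‖hφ.toLp φ‖ ^ 2 = ∫ a, ‖φ a‖ ^ 2 ∂μ := by
  rw [← inner_self_eq_norm_sq (𝕜 := 𝕜), L2.inner_toLp_eq_integral hφ.coeFn_toLp hφ]
  simp_rw [RCLike.conj_mul, ← RCLike.ofReal_pow, integral_ofReal, RCLike.ofReal_re]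

end L2

theorem MeasureTheory.Lp.dense_setOf_continuous_hasCompactSupport {α E : Type*}
    [TopologicalSpace α] [NormalSpace α] [R1Space α] [WeaklyLocallyCompactSpace α]
    [MeasurableSpace α] [BorelSpace α] {μ : Measure α} [μ.Regular] [NormedAddCommGroup E]
    [NormedSpace ℝ E] {p : ℝ≥0∞} [Fact (1 ≤ p)] (hp : p ≠ ∞) :
    Dense {f : Lp E p μ | ∃ g : α → E, Continuous g ∧ HasCompactSupport g ∧ f =ᵐ[μ] g} := by
  refine Metric.dense_iff.2 fun f r hr => ?_
  obtain ⟨g, hgs, hfg, hgc, hgm⟩ := (Lp.memLp f).exists_hasCompactSupport_eLpNorm_sub_le hp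
    (ENNReal.ofReal_pos.2 (half_pos hr)).ne'
  refine ⟨hgm.toLp g, ?_, g, hgc, hgs, hgm.coeFn_toLp⟩
  rw [Metric.mem_ball, dist_comm, Lp.dist_def,
    eLpNorm_congr_ae (EventuallyEq.rfl.sub hgm.coeFn_toLp)]
  exact (ENNReal.toReal_le_of_le_ofReal (half_pos hr).le hfg).trans_lt (half_lt_self hr)

section WeakConvergence

variable {ι 𝕜 E : Type*} [RCLike 𝕜] [NormedAddCommGroup E] [InnerProductSpace 𝕜 E] {l : Filter ι}
  {u : ι → E}

theorem tendsto_inner_zero_of_dense {C : ℝ} (hu : ∀ i, ‖u i‖ ≤ C) {S : Set E} (hS : Dense S)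
    (h : ∀ g ∈ S, Tendsto (fun i => inner 𝕜 g (u i)) l (𝓝 0)) (f : E) :
    Tendsto (fun i => inner 𝕜 f (u i)) l (𝓝 0) := by
  have hlip : ∀ i, LipschitzWith C.toNNReal fun x : E => inner 𝕜 x (u i) := fun i =>
    LipschitzWith.of_dist_le' fun x y => by
      rw [dist_eq_norm, ← inner_sub_left, dist_eq_norm, mul_comm]
      exact (norm_inner_le_norm _ _).trans (by gcongr; exact hu i)
  have hclosed := ((LipschitzWith.uniformEquicontinuous _ _ hlip).equicontinuous
    ).isClosed_setOfPred_tendsto (l := l) (continuous_const (y := (0 : 𝕜)))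
  exact hclosed.closure_subset_iff.2 h (hS f)

theorem not_tendsto_of_tendsto_inner_zero [l.NeBot]
    (hw : ∀ f, Tendsto (fun i => inner 𝕜 f (u i)) l (𝓝 0))
    (hu : ¬ Tendsto (fun i => ‖u i‖) l (𝓝 0)) (g : E) : ¬ Tendsto u l (𝓝 g) := by
  intro hg
  obtain rfl : g = 0 :=
    inner_self_eq_zero.1 (tendsto_nhds_unique (tendsto_const_nhds.inner hg) (hw g))
  exact hu (by simpa using hg.norm)

end WeakConvergence

def gridCell (δ : ℝ) (j : ℕ) : Set ℝ := Set.Icc (-((j + 1) * δ)) (-(j * δ))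

def squareWave (δ : ℝ) (m : ℕ) (s : ℝ) : ℝ :=
  ∑ k ∈ range m, ((gridCell δ (2 * k + 1)).indicator 1 s - (gridCell δ (2 * k)).indicator 1 s)

lemma indicator_gridCell {δ s : ℝ} {j : ℕ} (hs : s ∈ Set.Ioo (-((j + 1) * δ)) (-(j * δ))) (i : ℕ) :
    (gridCell δ i).indicator 1 s = if i = j then (1 : ℝ) else 0 := by
  have hδ : 0 < δ := by nlinarith [hs.1, hs.2]
  split_ifs with hij
  · subst hij; exact Set.indicator_of_mem (Set.Ioo_subset_Icc_self hs) _
  refine Set.indicator_of_notMem (fun hi => hij ?_) _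
  obtain ⟨hi₁, hi₂⟩ := hi
  have h₁ : (i : ℝ) < j + 1 := lt_of_mul_lt_mul_right (by linarith [hs.1]) hδ.le
  have h₂ : (j : ℝ) < i + 1 := lt_of_mul_lt_mul_right (by linarith [hs.2]) hδ.le
  have : i < j + 1 := by exact_mod_cast h₁
  have : j < i + 1 := by exact_mod_cast h₂
  omega

lemma gridCell_subset {δ : ℝ} (hδ : 0 ≤ δ) {j N : ℕ} (hj : j < N) :
    gridCell δ j ⊆ Set.Icc (-(N * δ)) 0 := by
  have : (j + 1 : ℝ) ≤ N := by exact_mod_cast hj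
  exact Set.Icc_subset_Icc (by nlinarith) (by nlinarith)

lemma squareWave_sq {δ s : ℝ} (hδ : 0 ≤ δ) {m : ℕ} (hs : ∀ j : ℕ, s ≠ -(j * δ)) :
    squareWave δ m s ^ 2 = (Set.Ioo (-(2 * m * δ)) 0).indicator 1 s := by
  by_cases hmem : s ∈ Set.Ioo (-(2 * m * δ)) 0
  · rw [Set.indicator_of_mem hmem, Pi.one_apply]
    obtain ⟨hs₁, hs₂⟩ := hmem
    have hδ' : 0 < δ := lt_of_le_of_ne hδ (by rintro rfl; linarith)
    set j := ⌊-s / δ⌋₊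
    have hj₁ : (j : ℝ) * δ ≤ -s := (le_div_iff₀ hδ').1 (Nat.floor_le (div_nonneg (by linarith) hδ))
    have hj₂ : -s < (j + 1) * δ := (div_lt_iff₀ hδ').1 (Nat.lt_floor_add_one _)
    have hsj : s ∈ Set.Ioo (-((j + 1) * δ)) (-(j * δ)) :=
      ⟨by linarith, lt_of_le_of_ne (by linarith) (hs j)⟩
    have hjm : j < 2 * m := by
      have : (j : ℝ) < 2 * m := lt_of_mul_lt_mul_right (by linarith) hδ
      exact_mod_cast this
    simp only [squareWave, indicator_gridCell hsj]
    obtain ⟨k, hk | hk⟩ := Nat.even_or_odd' j <;>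
    · rw [hk, Finset.sum_eq_single_of_mem k (Finset.mem_range.2 (by omega))
        (fun i _ hik => by split_ifs <;> first | omega | simp)]
      split_ifs <;> first | omega | norm_num
  · rw [Set.indicator_of_notMem hmem, squareWave, Finset.sum_eq_zero, zero_pow two_ne_zero]
    intro k hk
    have hs' : s ∉ Set.Icc (-((2 * m : ℕ) * δ)) 0 := fun h => hmem
      ⟨lt_of_le_of_ne (by exact_mod_cast h.1) (by exact_mod_cast (hs (2 * m)).symm),
        lt_of_le_of_ne h.2 (by simpa using hs 0)⟩
    have hk := Finset.mem_range.1 hk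
    rw [Set.indicator_of_notMem (fun h => hs' (gridCell_subset hδ (by omega) h)),
      Set.indicator_of_notMem (fun h => hs' (gridCell_subset hδ (by omega) h)), sub_zero]

lemma ae_ne_neg_nat_mul (δ : ℝ) : ∀ᵐ s : ℝ, ∀ j : ℕ, s ≠ -(j * δ) := by
  have : volume (Set.range fun j : ℕ => -(j * δ)) = 0 := (Set.countable_range _).measure_zero _
  filter_upwards [measure_eq_zero_iff_ae_notMem.1 this] with s hs j hj using hs ⟨j, hj.symm⟩

section Oscillation

variable {E : Type*} [NormedAddCommGroup E] [NormedSpace ℝ E] {ψ : ℝ → E} {δ : ℝ}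

lemma integral_indicator_gridCell (hδ : 0 ≤ δ) (j : ℕ) :
    ∫ x, (gridCell δ j).indicator ψ x = ∫ x in -((j + 1) * δ)..-(j * δ), ψ x := by
  rw [gridCell, integral_indicator measurableSet_Icc, integral_Icc_eq_integral_Ioc,
    intervalIntegral.integral_of_le (by nlinarith)]

lemma integral_squareWave_smul (hψ : Continuous ψ) (hδ : 0 ≤ δ) (m : ℕ) :
    ∫ s, squareWave δ m s • ψ s =
      ∑ k ∈ range m, ∫ x in -((2 * k + 2) * δ)..-((2 * k + 1) * δ), (ψ x - ψ (x + δ)) := by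
  have hint : ∀ j, Integrable ((gridCell δ j).indicator ψ) := fun j =>
    hψ.integrableOn_Icc.integrable_indicator measurableSet_Icc
  have hpt : ∀ s, squareWave δ m s • ψ s = ∑ k ∈ range m,
      ((gridCell δ (2 * k + 1)).indicator ψ s - (gridCell δ (2 * k)).indicator ψ s) := fun s => by
    simp only [squareWave, Finset.sum_smul, sub_smul, ← Set.indicator_smul_apply_left,
      Pi.one_apply, one_smul]
  rw [integral_congr_ae (ae_of_all _ hpt), integral_finsetSum _ (f := fun k s =>
    (gridCell δ (2 * k + 1)).indicator ψ s - (gridCell δ (2 * k)).indicator ψ s)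
    fun k _ => (hint _).sub (hint _)]
  refine Finset.sum_congr rfl fun k _ => ?_
  rw [integral_sub (hint _) (hint _), integral_indicator_gridCell hδ,
    integral_indicator_gridCell hδ,
    intervalIntegral.integral_sub (g := fun x => ψ (x + δ)) (hψ.intervalIntegrable _ _)
      ((hψ.comp (continuous_add_const δ)).intervalIntegrable _ _),
    intervalIntegral.integral_comp_add_right]
  push_cast
  ring_nf

lemma norm_integral_squareWave_smul_le (hψ : Continuous ψ) (hδ : 0 ≤ δ) (m : ℕ) {ε : ℝ}
    (hε : ∀ x, ‖ψ x - ψ (x + δ)‖ ≤ ε) : ‖∫ s, squareWave δ m s • ψ s‖ ≤ m * (ε * δ) := by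
  rw [integral_squareWave_smul hψ hδ]
  refine (norm_sum_le _ _).trans ?_
  calc ∑ k ∈ range m, ‖∫ x in -((2 * k + 2) * δ)..-((2 * k + 1) * δ), (ψ x - ψ (x + δ))‖
      ≤ ∑ k ∈ range m, ε * δ := Finset.sum_le_sum fun k _ =>
        (intervalIntegral.norm_integral_le_of_norm_le_const fun x _ => hε x).trans_eq
          (by rw [abs_of_nonneg (by linarith)]; ring)
    _ = m * (ε * δ) := by simp

theorem tendsto_integral_squareWave_smul (hψ : UniformContinuous ψ) {c : ℝ} (hc : 0 ≤ c) :
    Tendsto (fun n : ℕ => ∫ s, squareWave (c / n) n s • ψ s) atTop (𝓝 0) := by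
  refine NormedAddGroup.tendsto_nhds_zero.2 fun ε hε => ?_
  obtain ⟨η, hη, hψη⟩ := Metric.uniformContinuous_iff.1 hψ _ (div_pos hε (by linarith : 0 < c + 1))
  filter_upwards [(tendsto_const_div_atTop_nhds_zero_nat c).eventually (gt_mem_nhds hη),
    eventually_ne_atTop 0] with n hδ hn
  have hosc : ∀ x, ‖ψ x - ψ (x + c / n)‖ ≤ ε / (c + 1) := fun x => by
    rw [← dist_eq_norm]
    refine (hψη ?_).le
    rwa [dist_comm, Real.dist_eq, add_sub_cancel_left, abs_of_nonneg (by positivity)]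
  refine (norm_integral_squareWave_smul_le hψ.continuous (by positivity) n hosc).trans_lt ?_
  rw [mul_left_comm, mul_div_cancel₀ _ (Nat.cast_ne_zero.2 hn)]
  calc ε / (c + 1) * c < ε / (c + 1) * (c + 1) := by gcongr; linarith
    _ = ε := div_mul_cancel₀ _ (by positivity)

end Oscillation

lemma phiFL_eq_exp_mul_squareWave (t : ℝ) (n : ℕ) (s : ℝ) :
    phiFL t n s = ((Real.exp (-(t / 2 + s)) * squareWave (t / 4 / n) n s : ℝ) : ℂ) := by
  rw [phiFL, squareWave, ← Ico_add_one_right_eq_Icc, sum_Ico_eq_sum_range, Nat.add_sub_cancel]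
  congr 3 with k
  simp only [gridCell]
  congr 3 <;> push_cast <;> ring

lemma phiFL_zero (t : ℝ) : phiFL t 0 = 0 := by
  ext s; simp [phiFL]

lemma norm_sq_phiFL_ae_eq {t : ℝ} (ht : 0 ≤ t) {n : ℕ} (hn : n ≠ 0) :
    (fun s => ‖phiFL t n s‖ ^ 2) =ᵐ[volume]
      (Set.Ioo (-(t / 2)) 0).indicator (fun s => Real.exp (-(t + 2 * s))) := by
  have hδ : 0 ≤ t / 4 / n := by positivity
  have hlen : 2 * n * (t / 4 / n) = t / 2 := by field_simp; ring
  filter_upwards [ae_ne_neg_nat_mul (t / 4 / n)] with s hs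
  rw [phiFL_eq_exp_mul_squareWave, Complex.norm_real, Real.norm_eq_abs, sq_abs, mul_pow,
    squareWave_sq hδ hs, hlen, ← Real.exp_nat_mul, Set.indicator_apply, Set.indicator_apply]
  split_ifs
  · rw [Pi.one_apply, mul_one]; congr 1; push_cast; ring
  · rw [mul_zero]

lemma integral_indicator_Ioo_exp {t : ℝ} (ht : 0 ≤ t) :
    ∫ s, (Set.Ioo (-(t / 2)) 0).indicator (fun s => Real.exp (-(t + 2 * s))) s =
      (1 - Real.exp (-t)) / 2 := by
  rw [integral_indicator measurableSet_Ioo, ← integral_Ioc_eq_integral_Ioo,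
    ← intervalIntegral.integral_of_le (by linarith)]
  simp_rw [show ∀ s : ℝ, -(t + 2 * s) = -2 * s + -t from fun s => by ring]
  rw [intervalIntegral.integral_comp_mul_add (fun x => Real.exp x) (by norm_num), integral_exp,
    show -2 * -(t / 2) + -t = 0 by ring, Real.exp_zero, smul_eq_mul]
  ring_nf

lemma integral_norm_sq_phiFL {t : ℝ} (ht : 0 ≤ t) {n : ℕ} (hn : n ≠ 0) :
    ∫ s, ‖phiFL t n s‖ ^ 2 = (1 - Real.exp (-t)) / 2 := by
  rw [integral_congr_ae (norm_sq_phiFL_ae_eq ht hn), integral_indicator_Ioo_exp ht]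

lemma integral_norm_sq_phiFL_le {t : ℝ} (ht : 0 ≤ t) (n : ℕ) :
    ∫ s, ‖phiFL t n s‖ ^ 2 ≤ (1 - Real.exp (-t)) / 2 := by
  rcases eq_or_ne n 0 with rfl | hn
  · rw [show ∫ s, ‖phiFL t 0 s‖ ^ 2 = 0 by simp [phiFL_zero]]
    linarith [Real.exp_le_one_iff.2 (neg_nonpos.2 ht)]
  · exact (integral_norm_sq_phiFL ht hn).le

lemma measurable_phiFL (t : ℝ) (n : ℕ) : Measurable (phiFL t n) := by
  unfold phiFL; fun_prop (disch := exact measurableSet_Icc)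

lemma memLp_phiFL {t : ℝ} (ht : 0 ≤ t) (n : ℕ) : MemLp (phiFL t n) 2 := by
  rcases eq_or_ne n 0 with rfl | hn
  · rw [phiFL_zero]; exact MemLp.zero
  refine (memLp_two_iff_integrable_sq_norm (measurable_phiFL t n).aestronglyMeasurable).2 ?_
  refine Integrable.congr ?_ (norm_sq_phiFL_ae_eq ht hn).symm
  exact ((Continuous.integrableOn_Icc (by fun_prop)).mono_set Set.Ioo_subset_Icc_self
    ).integrable_indicator measurableSet_Ioo

theorem tendsto_integral_conj_mul_phiFL {t : ℝ} (ht : 0 ≤ t) {g : ℝ → ℂ} (hgc : Continuous g)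
    (hgs : HasCompactSupport g) :
    Tendsto (fun n : ℕ => ∫ s, starRingEnd ℂ (g s) * phiFL t n s) atTop (𝓝 0) := by
  have hψ : UniformContinuous fun s => Real.exp (-(t / 2 + s)) • starRingEnd ℂ (g s) :=
    HasCompactSupport.uniformContinuous_of_continuous
      ((hgs.comp_left (map_zero _)).smul_left (f := fun s => Real.exp (-(t / 2 + s)))) (by fun_prop)
  refine (tendsto_integral_squareWave_smul hψ (c := t / 4) (by positivity)).congr fun n => ?_
  congr 1 with s
  rw [phiFL_eq_exp_mul_squareWave, Complex.real_smul, Complex.real_smul, Complex.ofReal_mul]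
  ring

/-- For fixed `t > 0`: (i) `‖φ_{n,t}‖² = (1 − e^{−t})/2` for every `n ≥ 1`;
(ii) `φ_{n,t} → 0` weakly in `L²(ℝ)`; hence (iii) `(φ_{n,t})ₙ` does not converge in the norm
of `L²(ℝ)`. -/
theorem friedrichs_lee_no_norm_convergence (t : ℝ) (ht : 0 < t) :
    (∀ n : ℕ, 1 ≤ n → ∫ s : ℝ, ‖phiFL t n s‖ ^ 2 = (1 - Real.exp (-t)) / 2) ∧
    (∀ f : Lp ℂ 2 (volume : Measure ℝ),
      Tendsto (fun n : ℕ => ∫ s : ℝ, (starRingEnd ℂ) (f s) * phiFL t n s) atTop (nhds 0)) ∧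
    ¬ ∃ g : ℝ → ℂ, MemLp g 2 (volume : Measure ℝ) ∧
        Tendsto (fun n : ℕ => eLpNorm (fun s => phiFL t n s - g s) 2 volume) atTop (nhds 0) := by
  have hc : 0 < (1 - Real.exp (-t)) / 2 := by linarith [Real.exp_lt_one_iff.2 (neg_neg_of_pos ht)]
  set Φ : ℕ → Lp ℂ 2 (volume : Measure ℝ) := fun n => (memLp_phiFL ht.le n).toLp (phiFL t n)
  have hinner : ∀ (f : Lp ℂ 2 (volume : Measure ℝ)) {g : ℝ → ℂ}, f =ᵐ[volume] g → ∀ n,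
      inner ℂ f (Φ n) = ∫ s, starRingEnd ℂ (g s) * phiFL t n s := fun _ _ hfg _ =>
    L2.inner_toLp_eq_integral hfg _
  have hΦsq : ∀ n, ‖Φ n‖ ^ 2 = ∫ s, ‖phiFL t n s‖ ^ 2 := fun n => L2.norm_toLp_sq _
  have hweak : ∀ f, Tendsto (fun n => inner ℂ f (Φ n)) atTop (𝓝 0) :=
    tendsto_inner_zero_of_dense
      (fun n => (Real.le_sqrt (norm_nonneg _) hc.le).2 (hΦsq n ▸ integral_norm_sq_phiFL_le ht.le n))
      (Lp.dense_setOf_continuous_hasCompactSupport ENNReal.ofNat_ne_top)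
      fun _ ⟨g, hgc, hgs, hfg⟩ => by
        simpa only [hinner _ hfg] using tendsto_integral_conj_mul_phiFL ht.le hgc hgs
  refine ⟨fun n hn => integral_norm_sq_phiFL ht.le (by omega),
    fun f => by simpa only [hinner f EventuallyEq.rfl] using hweak f, ?_⟩
  rintro ⟨g, hg, hlim⟩
  refine not_tendsto_of_tendsto_inner_zero hweak (fun h0 => hc.ne' ?_) (hg.toLp g)
    ((Lp.tendsto_Lp_iff_tendsto_eLpNorm'' _ _ _ hg).2 hlim)
  refine tendsto_nhds_unique (tendsto_const_nhds.congr' ?_) (by simpa using h0.pow 2)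
  filter_upwards [eventually_ne_atTop 0] with n hn
  rw [hΦsq, integral_norm_sq_phiFL ht.le hn]
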